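/- arXiv:1906.03494 — 5 statements merged into one kernel-verified Lean document; each statement's English description precedes it below -/
import Mathlib

section
/- Let X be a 0-hyperbolic metric space with basepoint x₀ and R > 0. Define the family 𝒱₀ of subsets of X as the collection of equivalence classes of ∼_{(2n−1)R, R} on the intervals [(2n−1)R, 2nR) for n ∈ ℕ, where x ∼_{α,r} y ⟺ (x|y)_{x₀} > α − r/2. Then 𝒱₀ is R-disjoint (any two distinct members are at distance ≥ R) and uniformly bounded with mesh at most 3R. -/
/-- The Gromov product of `x` and `y` with respect to the basepoint `x₀`. -/
noncomputable def gromovProduct {X : Type*} [MetricSpace X] (x₀ x y : X) : ℝ :=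
  (dist x x₀ + dist y x₀ - dist x y) / 2

/-- The interval `[α, β)` around the basepoint `x₀`. -/
def annulus {X : Type*} [MetricSpace X] (x₀ : X) (α β : ℝ) : Set X :=
  {x : X | α ≤ dist x x₀ ∧ dist x x₀ < β}

/-- The family `𝒱₀` of equivalence classes of `∼_{(2n-1)R,R}` on `[(2n-1)R, 2nR)`,
`n ≥ 1`. -/
noncomputable def familyV0 {X : Type*} [MetricSpace X] (x₀ : X) (R : ℝ) :
    Set (Set X) :=
  {C | ∃ n : ℕ, 1 ≤ n ∧ ∃ x ∈ annulus x₀ ((2 * n - 1) * R) (2 * n * R),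
    C = {y ∈ annulus x₀ ((2 * n - 1) * R) (2 * n * R) |
          gromovProduct x₀ x y > (2 * n - 1) * R - R / 2}}

theorem familyV0_disjoint_bounded {X : Type*} [MetricSpace X] (x₀ : X)
    (hyp : ∀ x y z : X,
      gromovProduct x₀ x z ≥ min (gromovProduct x₀ x y) (gromovProduct x₀ y z))
    (R : ℝ) (hR : 0 < R) :
    (∀ A ∈ familyV0 x₀ R, ∀ B ∈ familyV0 x₀ R, A ≠ B →
      ∀ x ∈ A, ∀ y ∈ B, dist x y ≥ R) ∧
    (∀ A ∈ familyV0 x₀ R, ∀ x ∈ A, ∀ y ∈ A, dist x y ≤ 3 * R) := by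
  have gsymm : ∀ x y : X, gromovProduct x₀ x y = gromovProduct x₀ y x := by
    intro x y; unfold gromovProduct; rw [dist_comm x y]; ring
  have gtrans : ∀ (t : ℝ) (x a y : X), gromovProduct x₀ x a > t →
      gromovProduct x₀ x y > t → gromovProduct x₀ a y > t := by
    intro t x a y h1 h2
    have h := hyp a x y
    rw [gsymm a x] at h
    exact lt_of_lt_of_le (lt_min h1 h2) h
  constructor
  · rintro A ⟨n, hn, x, hx, rfl⟩ B ⟨m, hm, x', hx', rfl⟩ hAB a ha b hb
    obtain ⟨⟨ha1, ha2⟩, hxa⟩ := ha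
    obtain ⟨⟨hb1, hb2⟩, hxb⟩ := hb
    have hdab : dist b x₀ ≤ dist a b + dist a x₀ := by
      rw [dist_comm a b]; exact dist_triangle b a x₀
    have hdba : dist a x₀ ≤ dist a b + dist b x₀ := dist_triangle a b x₀
    rcases lt_trichotomy n m with hnm | hnm | hnm
    · have hc : ((n : ℝ)) + 1 ≤ (m : ℝ) := by exact_mod_cast hnm
      nlinarith
    · subst hnm
      -- same level: show the Gromov product of a and b is small
      by_contra hcon
      push_neg at hcon
      have hab : gromovProduct x₀ a b > (2 * n - 1) * R - R / 2 := by
        unfold gromovProduct; linarith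
      -- then A = B, contradiction
      apply hAB
      have hxb' : gromovProduct x₀ x b > (2 * n - 1) * R - R / 2 := by
        refine gtrans _ a x b ?_ hab
        rw [gsymm]; exact hxa
      have hxx' : gromovProduct x₀ x x' > (2 * n - 1) * R - R / 2 := by
        refine gtrans _ b x x' ?_ ?_
        · rw [gsymm]; exact hxb'
        · rw [gsymm]; exact hxb
      ext y
      simp only [Set.mem_setOf_eq]
      constructor
      · rintro ⟨hy1, hy2⟩
        exact ⟨hy1, gtrans _ x x' y hxx' hy2⟩
      · rintro ⟨hy1, hy2⟩
        exact ⟨hy1, gtrans _ x' x y (by rw [gsymm x' x]; exact hxx') hy2⟩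
    · have hc : ((m : ℝ)) + 1 ≤ (n : ℝ) := by exact_mod_cast hnm
      nlinarith
  · rintro A ⟨n, hn, x, hx, rfl⟩ a ha b hb
    obtain ⟨⟨ha1, ha2⟩, hxa⟩ := ha
    obtain ⟨⟨hb1, hb2⟩, hxb⟩ := hb
    have hab : gromovProduct x₀ a b > (2 * n - 1) * R - R / 2 := by
      refine gtrans _ x a b hxa hxb
    unfold gromovProduct at hab
    linarith
end

section
/- Every 0-hyperbolic metric space X has asymptotic dimension at most 1: for every r > 0 there exist two r-disjoint, uniformly bounded families of subsets of X whose union covers X. -/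
theorem zero_hyperbolic_asdim_le_one {X : Type*} [MetricSpace X] (x₀ : X)
    (hyp : ∀ x y z : X,
      gromovProduct x₀ x z ≥ min (gromovProduct x₀ x y) (gromovProduct x₀ y z)) :
    ∀ r : ℝ, 0 < r →
      ∃ 𝒰 𝒱 : Set (Set X),
        (∃ M : ℝ, (∀ A ∈ 𝒰, ∀ x ∈ A, ∀ y ∈ A, dist x y ≤ M) ∧
                  (∀ B ∈ 𝒱, ∀ x ∈ B, ∀ y ∈ B, dist x y ≤ M)) ∧
        (∀ A ∈ 𝒰, ∀ B ∈ 𝒰, A ≠ B → ∀ x ∈ A, ∀ y ∈ B, dist x y ≥ r) ∧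
        (∀ A ∈ 𝒱, ∀ B ∈ 𝒱, A ≠ B → ∀ x ∈ A, ∀ y ∈ B, dist x y ≥ r) ∧
        (∀ x : X, ∃ C, (C ∈ 𝒰 ∨ C ∈ 𝒱) ∧ x ∈ C) := by
  intro r hr
  -- annulus index
  set n : X → ℕ := fun x => ⌊dist x x₀ / r⌋₊ with hn
  have hlow : ∀ x : X, (n x : ℝ) * r ≤ dist x x₀ := by
    intro x
    have h1 : (n x : ℝ) ≤ dist x x₀ / r := Nat.floor_le (by positivity)
    calc (n x : ℝ) * r ≤ (dist x x₀ / r) * r := by nlinarith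
      _ = dist x x₀ := by field_simp
  have hhigh : ∀ x : X, dist x x₀ < ((n x : ℝ) + 1) * r := by
    intro x
    have h1 : dist x x₀ / r < (n x : ℝ) + 1 := Nat.lt_floor_add_one _
    calc dist x x₀ = (dist x x₀ / r) * r := by field_simp
      _ < ((n x : ℝ) + 1) * r := by nlinarith
  have hsymm : ∀ x y : X, gromovProduct x₀ x y = gromovProduct x₀ y x := by
    intro x y; unfold gromovProduct; rw [dist_comm x y]; ring
  have hself : ∀ x : X, gromovProduct x₀ x x = dist x x₀ := by
    intro x; unfold gromovProduct; simp
  have hdist : ∀ x y : X, dist x y = dist x x₀ + dist y x₀ - 2 * gromovProduct x₀ x y := by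
    intro x y; unfold gromovProduct; ring
  -- the cluster of x
  set C : X → Set X := fun x => {y | n y = n x ∧ gromovProduct x₀ x y > (n x : ℝ) * r - r / 2}
    with hC
  have hmem : ∀ x : X, x ∈ C x := by
    intro x
    refine ⟨rfl, ?_⟩
    rw [hself]
    have := hlow x
    linarith
  have hkey : ∀ x y : X, y ∈ C x → C y = C x := by
    intro x y ⟨hny, hgy⟩
    ext z
    simp only [hC, Set.mem_setOf_eq]
    constructor
    · rintro ⟨hnz, hgz⟩
      refine ⟨hnz.trans hny, ?_⟩
      have h := hyp x y z
      rw [hny] at hgz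
      have := min_le_left (gromovProduct x₀ x y) (gromovProduct x₀ y z)
      have := min_le_right (gromovProduct x₀ x y) (gromovProduct x₀ y z)
      rcases min_cases (gromovProduct x₀ x y) (gromovProduct x₀ y z) with ⟨he, _⟩ | ⟨he, _⟩ <;>
        rw [he] at h <;> linarith
    · rintro ⟨hnz, hgz⟩
      refine ⟨hnz.trans hny.symm, ?_⟩
      have h := hyp y x z
      rw [hsymm y x] at h
      rw [hny]
      rcases min_cases (gromovProduct x₀ x y) (gromovProduct x₀ x z) with ⟨he, _⟩ | ⟨he, _⟩ <;>
        rw [he] at h <;> linarith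
  -- boundedness
  have hdiam : ∀ x a b : X, a ∈ C x → b ∈ C x → dist a b ≤ 3 * r := by
    intro x a b ⟨hna, hga⟩ ⟨hnb, hgb⟩
    have h := hyp a x b
    rw [hsymm a x] at h
    have hg : gromovProduct x₀ a b > (n x : ℝ) * r - r / 2 := by
      rcases min_cases (gromovProduct x₀ x a) (gromovProduct x₀ x b) with ⟨he, _⟩ | ⟨he, _⟩ <;>
        rw [he] at h <;> linarith
    have ha := hhigh a
    have hb := hhigh b
    rw [hna] at ha; rw [hnb] at hb
    rw [hdist a b]
    linarith
  -- separation
  have hsep : ∀ x y : X, n x % 2 = n y % 2 → C x ≠ C y →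
      ∀ a ∈ C x, ∀ b ∈ C y, dist a b ≥ r := by
    intro x y hpar hne a ha b hb
    have hCa := hkey x a ha
    have hCb := hkey y b hb
    obtain ⟨hna, _⟩ := ha
    obtain ⟨hnb, _⟩ := hb
    by_cases hnn : n a = n b
    · -- same annulus: Gromov product must be small
      have hgsmall : gromovProduct x₀ a b ≤ (n a : ℝ) * r - r / 2 := by
        by_contra hcon
        push_neg at hcon
        have hbCa : b ∈ C a := ⟨hnn.symm, hcon⟩
        have := hkey a b hbCa
        exact hne (hCa ▸ hCb ▸ this ▸ rfl)
      have ha' := hlow a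
      have hb' := hlow b
      have heq : (n b : ℝ) = (n a : ℝ) := by exact_mod_cast hnn.symm
      rw [heq] at hb'
      rw [hdist a b]
      linarith
    · -- different annuli of same parity: indices differ by ≥ 2
      rw [hna, hnb] at hnn
      have h2 : n x + 2 ≤ n y ∨ n y + 2 ≤ n x := by omega
      have htri1 : dist b x₀ ≤ dist b a + dist a x₀ := dist_triangle b a x₀
      have htri2 : dist a x₀ ≤ dist a b + dist b x₀ := dist_triangle a b x₀
      rw [dist_comm b a] at htri1
      have ha1 := hlow a; have ha2 := hhigh a
      have hb1 := hlow b; have hb2 := hhigh b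
      rw [hna] at ha1 ha2; rw [hnb] at hb1 hb2
      rcases h2 with h2 | h2
      · have : (n x : ℝ) + 2 ≤ (n y : ℝ) := by exact_mod_cast h2
        nlinarith
      · have : (n y : ℝ) + 2 ≤ (n x : ℝ) := by exact_mod_cast h2
        nlinarith
  refine ⟨{s | ∃ x, n x % 2 = 0 ∧ s = C x}, {s | ∃ x, n x % 2 = 1 ∧ s = C x}, ?_, ?_, ?_, ?_⟩
  · refine ⟨3 * r, ?_, ?_⟩
    · rintro A ⟨x, _, rfl⟩ a ha b hb; exact hdiam x a b ha hb
    · rintro A ⟨x, _, rfl⟩ a ha b hb; exact hdiam x a b ha hb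
  · rintro A ⟨x, hx, rfl⟩ B ⟨y, hy, rfl⟩ hne a ha b hb
    exact hsep x y (hx.trans hy.symm) hne a ha b hb
  · rintro A ⟨x, hx, rfl⟩ B ⟨y, hy, rfl⟩ hne a ha b hb
    exact hsep x y (hx.trans hy.symm) hne a ha b hb
  · intro x
    rcases Nat.even_or_odd (n x) with h | h
    · exact ⟨C x, Or.inl ⟨x, Nat.even_iff.mp h, rfl⟩, hmem x⟩
    · exact ⟨C x, Or.inr ⟨x, Nat.odd_iff.mp h, rfl⟩, hmem x⟩
end

section
/- Let (Xᵢ, dᵢ, oᵢ)_{i∈ℕ} be a sequence of 1-discrete pointed metric spaces such that each Xᵢ has all closed balls finite (i.e., each dᵢ is proper on the discrete space Xᵢ). Then the direct sum ⊕Xᵢ with metric d((xᵢ),(yᵢ)) = Σᵢ i·dᵢ(xᵢ,yᵢ) is a proper discrete metric space: every ball is finite. -/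
/-- The weighted sum metric `d((xᵢ),(yᵢ)) = Σᵢ i·dᵢ(xᵢ,yᵢ)` on the direct sum,
where the spaces are indexed by `i = 1, 2, …` (here `i : ℕ` with weight `i + 1`). -/
noncomputable def sumDist {X : ℕ → Type*} [∀ i, MetricSpace (X i)]
    (x y : ∀ i, X i) : ℝ :=
  ∑ᶠ i : ℕ, ((i : ℝ) + 1) * dist (x i) (y i)

/-- The direct sum `⊕Xᵢ` as a subtype: all but finitely many coordinates equal
the basepoint. -/
def DirectSumSpace {X : ℕ → Type*} (o : ∀ i, X i) : Type _ :=
  {x : ∀ i, X i // {i | x i ≠ o i}.Finite}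

theorem directSum_proper {X : ℕ → Type*} [∀ i, MetricSpace (X i)]
    (o : ∀ i, X i)
    (hdisc : ∀ i, ∀ a b : X i, a ≠ b → dist a b ≥ 1)
    (hproper : ∀ i, ∀ (c : X i) (R : ℝ), {a : X i | dist a c ≤ R}.Finite)
    (c : DirectSumSpace o) (R : ℝ) :
    {x : DirectSumSpace o | sumDist x.1 c.1 ≤ R}.Finite := by
  set N := ⌈R⌉₊ with hNdef
  have key : ∀ x : DirectSumSpace o, sumDist x.1 c.1 ≤ R →
      (∀ j, dist (x.1 j) (c.1 j) ≤ R) ∧ ∀ j, N ≤ j → x.1 j = c.1 j := by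
    intro x hx
    set f : ℕ → ℝ := fun i => ((i : ℝ) + 1) * dist (x.1 i) (c.1 i) with hf
    have hsupp : (Function.support f).Finite := by
      apply (x.2.union c.2).subset
      intro i hi
      by_contra h
      simp only [Set.mem_union, Set.mem_setOf_eq, not_or, not_not] at h
      obtain ⟨h1, h2⟩ := h
      apply hi
      simp only [hf, Function.mem_support, not_not]
      rw [h1, h2, dist_self, mul_zero]
    have hnn : ∀ i, 0 ≤ f i := fun i =>
      mul_nonneg (by positivity) dist_nonneg
    have h1 : ∀ j, f j ≤ R := fun j =>
      le_trans (single_le_finsum j hsupp hnn) hx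
    constructor
    · intro j
      have hd : (0:ℝ) ≤ dist (x.1 j) (c.1 j) := dist_nonneg
      have hj : (0:ℝ) ≤ (j : ℝ) := Nat.cast_nonneg j
      have := h1 j
      simp only [hf] at this
      nlinarith
    · intro j hj
      by_contra hne
      have hge := hdisc j _ _ hne
      have hj0 : (0:ℝ) ≤ (j : ℝ) := Nat.cast_nonneg j
      have hfj : ((j : ℝ) + 1) ≤ f j := by
        simp only [hf]; nlinarith
      have hR : ((j : ℝ) + 1) ≤ R := hfj.trans (h1 j)
      have h2 : (N : ℝ) ≤ (j : ℝ) := Nat.cast_le.mpr hj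
      have h3 : R ≤ (N : ℝ) := Nat.le_ceil R
      linarith
  haveI : ∀ j : ℕ, Finite {a : X j // dist a (c.1 j) ≤ R} := fun j =>
    (hproper j (c.1 j) R).to_subtype
  rw [← Set.finite_coe_iff]
  apply Finite.of_injective
    (β := ∀ j : Fin N, {a : X j // dist a (c.1 j) ≤ R})
    (fun x => fun j => ⟨x.1.1 j, (key x.1 x.2).1 j⟩)
  rintro ⟨x, hx⟩ ⟨y, hy⟩ hxy
  ext1
  apply Subtype.ext
  funext j
  by_cases hjN : j < N
  · have := congrFun hxy ⟨j, hjN⟩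
    exact congrArg Subtype.val this
  · push_neg at hjN
    rw [(key x hx).2 j hjN, (key y hy).2 j hjN]
end

section
/- Let X be a 0-hyperbolic metric space with basepoint x₀, and let 0 < R₀ < S, m ∈ ℕ. For l ∈ {0,…,2^m−1}, define 𝒟_l as the collection of equivalence classes of ∼_{(2^m n+l)S−R₀, 2^m S−R₀} on the intervals [(2^m n+l)S−R₀, (2^m n+l)S) for n ∈ ℕ₀, where x ∼_{α,r} y ⟺ (x|y)_{x₀} > α − r/2. Then the union of families ⋃_{l=0}^{2^m−1} 𝒟_l is (S−R₀)-disjoint and uniformly bounded. -/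
/-- The family `𝒟_l`: equivalence classes of `∼_{(2^m n + l)S − R₀, 2^m S − R₀}` on
the intervals `[(2^m n + l)S − R₀, (2^m n + l)S)`, `n ∈ ℕ₀`. -/
noncomputable def familyD {X : Type*} [MetricSpace X] (x₀ : X)
    (S R₀ : ℝ) (m l : ℕ) : Set (Set X) :=
  {C | ∃ n : ℕ,
    ∃ x ∈ annulus x₀ (((2 ^ m : ℝ) * n + l) * S - R₀) (((2 ^ m : ℝ) * n + l) * S),
    C = {y ∈ annulus x₀ (((2 ^ m : ℝ) * n + l) * S - R₀) (((2 ^ m : ℝ) * n + l) * S) |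
          gromovProduct x₀ x y >
            ((2 ^ m : ℝ) * n + l) * S - R₀ - ((2 ^ m : ℝ) * S - R₀) / 2}}

theorem familyD_union_disjoint_bounded {X : Type*} [MetricSpace X] (x₀ : X)
    (hyp : ∀ x y z : X,
      gromovProduct x₀ x z ≥ min (gromovProduct x₀ x y) (gromovProduct x₀ y z))
    (S R₀ : ℝ) (hR₀ : 0 < R₀) (hRS : R₀ < S) (m : ℕ) :
    (∀ l < 2 ^ m, ∀ l' < 2 ^ m, ∀ A ∈ familyD x₀ S R₀ m l,
      ∀ B ∈ familyD x₀ S R₀ m l', A ≠ B →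
        ∀ x ∈ A, ∀ y ∈ B, dist x y ≥ S - R₀) ∧
    (∃ M : ℝ, ∀ l < 2 ^ m, ∀ A ∈ familyD x₀ S R₀ m l,
        ∀ x ∈ A, ∀ y ∈ A, dist x y ≤ M) := by
  have hS : 0 < S := hR₀.trans hRS
  have h2m : (1 : ℝ) ≤ 2 ^ m := one_le_pow₀ (by norm_num)
  have gpsymm : ∀ x y : X, gromovProduct x₀ x y = gromovProduct x₀ y x := by
    intro x y; unfold gromovProduct; rw [dist_comm x y]; ring
  have gpd : ∀ x y : X, dist x y = dist x x₀ + dist y x₀ - 2 * gromovProduct x₀ x y := by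
    intro x y; unfold gromovProduct; ring
  constructor
  · intro l hl l' hl' A hA B hB hAB x hx y hy
    obtain ⟨n, a, ha, rfl⟩ := hA
    obtain ⟨n', b, hb, rfl⟩ := hB
    simp only [Set.mem_setOf_eq, annulus] at hx hy ha hb
    obtain ⟨⟨hx1, hx2⟩, hx3⟩ := hx
    obtain ⟨⟨hy1, hy2⟩, hy3⟩ := hy
    by_cases hk : 2 ^ m * n + l = 2 ^ m * n' + l'
    · -- same annulus: different equivalence classes
      have hcast : ((2 : ℝ) ^ m * n' + l') = ((2 : ℝ) ^ m * n + l) := by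
        have h := congrArg (Nat.cast (R := ℝ)) hk
        push_cast at h; linarith
      rw [hcast] at hb hy1 hy2 hy3 hAB
      set t : ℝ := ((2 : ℝ) ^ m * n + l) * S - R₀ - ((2 : ℝ) ^ m * S - R₀) / 2 with ht
      -- a and b are inequivalent
      have hab : gromovProduct x₀ a b ≤ t := by
        by_contra h
        push_neg at h
        apply hAB
        ext z
        simp only [Set.mem_setOf_eq, annulus]
        constructor
        · rintro ⟨hz1, hz2⟩
          refine ⟨hz1, ?_⟩
          have := hyp b a z
          rw [gpsymm b a] at this
          exact lt_of_lt_of_le (lt_min h hz2) this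
        · rintro ⟨hz1, hz2⟩
          refine ⟨hz1, ?_⟩
          have := hyp a b z
          exact lt_of_lt_of_le (lt_min h hz2) this
      -- hence gromovProduct x₀ x y ≤ t
      have hxy : gromovProduct x₀ x y ≤ t := by
        by_contra h
        push_neg at h
        have h1 : gromovProduct x₀ a y > t := by
          have := hyp a x y
          exact lt_of_lt_of_le (lt_min hx3 h) this
        have h2 : gromovProduct x₀ a b > t := by
          have := hyp a y b
          rw [gpsymm y b] at this
          exact lt_of_lt_of_le (lt_min h1 hy3) this
        linarith
      have hd := gpd x y
      have hprod : S ≤ (2 : ℝ) ^ m * S := le_mul_of_one_le_left hS.le h2m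
      -- dist x y ≥ 2^m S − R₀ ≥ S − R₀
      have hα : ((2 : ℝ) ^ m * n + l) * S - R₀ ≤ dist x x₀ := hx1
      rw [ht] at hxy
      linarith
    · -- different annuli
      have h1 := abs_dist_sub_le x y x₀
      have h2 : dist x x₀ - dist y x₀ ≤ |dist x x₀ - dist y x₀| := le_abs_self _
      have h3 : -(dist x x₀ - dist y x₀) ≤ |dist x x₀ - dist y x₀| := neg_le_abs _
      rcases lt_or_gt_of_ne hk with h | h
      · have hc : ((2 : ℝ) ^ m * n + l) + 1 ≤ (2 : ℝ) ^ m * n' + l' := by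
          have h' : (2 ^ m * n + l) + 1 ≤ 2 ^ m * n' + l' := h
          have := (Nat.cast_le (α := ℝ)).mpr h'
          push_cast at this; linarith
        have hmul : (((2 : ℝ) ^ m * n + l) + 1) * S ≤ ((2 : ℝ) ^ m * n' + l') * S :=
          mul_le_mul_of_nonneg_right hc hS.le
        linarith
      · have hc : ((2 : ℝ) ^ m * n' + l') + 1 ≤ (2 : ℝ) ^ m * n + l := by
          have h' : (2 ^ m * n' + l') + 1 ≤ 2 ^ m * n + l := h
          have := (Nat.cast_le (α := ℝ)).mpr h'
          push_cast at this; linarith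
        have hmul : (((2 : ℝ) ^ m * n' + l') + 1) * S ≤ ((2 : ℝ) ^ m * n + l) * S :=
          mul_le_mul_of_nonneg_right hc hS.le
        linarith
  · refine ⟨2 ^ m * S + R₀, ?_⟩
    intro l hl A hA x hx y hy
    obtain ⟨n, a, ha, rfl⟩ := hA
    simp only [Set.mem_setOf_eq, annulus] at hx hy
    obtain ⟨⟨hx1, hx2⟩, hx3⟩ := hx
    obtain ⟨⟨hy1, hy2⟩, hy3⟩ := hy
    have h1 := hyp x a y
    rw [gpsymm x a] at h1
    have hgt : gromovProduct x₀ x y >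
        ((2 : ℝ) ^ m * n + l) * S - R₀ - ((2 : ℝ) ^ m * S - R₀) / 2 :=
      lt_of_lt_of_le (lt_min hx3 hy3) h1
    have hd := gpd x y
    linarith
end

section
/- Asymptotic property C is a coarse invariant: if f : X → Y is a coarse equivalence between metric spaces and Y has asymptotic property C, then X has asymptotic property C. -/
/-- A metric space `X` has asymptotic property C if for every strictly increasing
sequence `(aᵢ)` of naturals there are finitely many uniformly bounded families,
the `i`-th being `aᵢ`-disjoint, which together cover `X`. -/
def HasAsymptoticPropertyC (X : Type*) [MetricSpace X] : Prop :=
  ∀ a : ℕ → ℕ, StrictMono a →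
    ∃ n : ℕ, ∃ 𝒰 : Fin n → Set (Set X),
      (∃ M : ℝ, ∀ i : Fin n, ∀ A ∈ 𝒰 i, ∀ x ∈ A, ∀ y ∈ A, dist x y ≤ M) ∧
      (∀ i : Fin n, ∀ A ∈ 𝒰 i, ∀ B ∈ 𝒰 i, A ≠ B →
        ∀ x ∈ A, ∀ y ∈ B, dist x y ≥ (a i : ℝ)) ∧
      (∀ x : X, ∃ i : Fin n, ∃ A ∈ 𝒰 i, x ∈ A)

theorem asymptotic_property_C_coarse_invariant
    {X Y : Type*} [MetricSpace X] [MetricSpace Y] (f : X → Y)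
    (ρlow ρupp : ℝ → ℝ) (hmono1 : Monotone ρlow) (hmono2 : Monotone ρupp)
    (hunb : ∀ C : ℝ, ∃ t : ℝ, 0 ≤ t ∧ C < ρlow t)
    (hcontrol : ∀ x x' : X,
      ρlow (dist x x') ≤ dist (f x) (f x') ∧ dist (f x) (f x') ≤ ρupp (dist x x'))
    (hdense : ∃ K : ℝ, ∀ y : Y, ∃ x : X, dist y (f x) ≤ K)
    (hY : HasAsymptoticPropertyC Y) :
    HasAsymptoticPropertyC X := by
  intro a ha
  -- choose b i > ρupp (a i), strictly monotone
  set b : ℕ → ℕ := fun i => i + ⌈ρupp (a i)⌉₊ + 1 with hb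
  have hbmono : StrictMono b := by
    intro i j hij
    have h1 : ⌈ρupp (a i)⌉₊ ≤ ⌈ρupp (a j)⌉₊ :=
      Nat.ceil_le_ceil (hmono2 (by exact_mod_cast (ha hij).le))
    simp only [hb]
    omega
  obtain ⟨n, 𝒱, ⟨M, hM⟩, hdisj, hcov⟩ := hY b hbmono
  refine ⟨n, fun i => (fun V => f ⁻¹' V) '' (𝒱 i), ?_, ?_, ?_⟩
  · obtain ⟨t, ht0, htM⟩ := hunb M
    refine ⟨t, ?_⟩
    rintro i A ⟨V, hV, rfl⟩ x hx y hy
    by_contra h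
    push_neg at h
    have h1 : ρlow t ≤ ρlow (dist x y) := hmono1 h.le
    have h2 : ρlow (dist x y) ≤ dist (f x) (f y) := (hcontrol x y).1
    have h3 : dist (f x) (f y) ≤ M := hM i V hV _ hx _ hy
    linarith
  · rintro i A ⟨V, hV, rfl⟩ B ⟨W, hW, rfl⟩ hAB x hx y hy
    have hVW : V ≠ W := by rintro rfl; exact hAB rfl
    have h1 : dist (f x) (f y) ≥ (b i : ℝ) := hdisj i V hV W hW hVW _ hx _ hy
    by_contra h
    push_neg at h
    have h2 : dist (f x) (f y) ≤ ρupp (dist x y) := (hcontrol x y).2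
    have h3 : ρupp (dist x y) ≤ ρupp (a i) := hmono2 h.le
    have h4 : ρupp (a i) ≤ (⌈ρupp (a i)⌉₊ : ℝ) := Nat.le_ceil _
    have h5 : ((⌈ρupp (a i)⌉₊ : ℕ) : ℝ) < (b i : ℝ) := by
      have : ⌈ρupp (a i)⌉₊ < b i := by simp only [hb]; omega
      exact_mod_cast this
    linarith
  · intro x
    obtain ⟨i, V, hV, hxV⟩ := hcov (f x)
    exact ⟨i, f ⁻¹' V, ⟨V, hV, rfl⟩, hxV⟩
end
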